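/- Let C and V be partial orders and (φ, ψ) a Galois connection between them (φ(c) ≤ v ⇔ c ≤ ψ(v)); set ♭ = φ∘ψ and let J be the quantization Grothendieck topology on V (a sieve on v covers iff it contains ♭(v) ⟶ v). Let g : V ⥤ C be the functor induced by ψ. Then for every presheaf P : C^op ⥤ Type, the presheaf ψ*P := g.op ⋙ P (so (ψ*P)(v) = P(ψ(v))) is a sheaf for J. -/

import Mathlib

/-!
A presheaf on `C` is a sheaf for the trivial topology `⊥`, and restriction along a right adjoint
is continuous as soon as the left adjoint is cocontinuous. So it suffices that `φ` pulls every
covering sieve on `φ c` back to the maximal sieve on `c`: for `c' ≤ c` we have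
`φ c' ≤ φ (ψ (φ c)) = ♭ (φ c)`, so `φ c' ⟶ φ c` factors through the arrow `♭ (φ c) ⟶ φ c`,
which every covering sieve contains.
-/

open CategoryTheory

/-- The quantization Grothendieck topology on a partial order `V` induced by a
monotone idempotent deflation `♭ : V → V`: a sieve on `v` covers iff it contains
the morphism `♭(v) ⟶ v`. -/
def quantTopology {V : Type*} [PartialOrder V] {b : V → V} (hb : Monotone b)
    (hle : ∀ v, b v ≤ v) (hidem : ∀ v, b (b v) = b v) :
    GrothendieckTopology V where
  sieves v := { S | S.arrows (homOfLE (hle v)) }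
  top_mem' v := trivial
  pullback_stable' := by
    intro v v' S f hS
    exact S.downward_closed hS (homOfLE (hb (leOfHom f)))
  transitive' := by
    intro v S hS R hR
    have key : ∀ {x y : V} (_ : x = y) (hx : x ≤ v) (hy : y ≤ v),
        R.arrows (homOfLE hx) → R.arrows (homOfLE hy) := by
      rintro x y rfl hx hy h
      exact h
    exact key (hidem v) ((hle (b v)).trans (hle v)) (hle v) (hR hS)

namespace GaloisConnection

variable {C V : Type*} [PartialOrder C] [PartialOrder V] {φ : C → V} {ψ : V → C}
  (gc : GaloisConnection φ ψ)

theorem isCocontinuous_quantTopology :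
    gc.monotone_l.functor.IsCocontinuous ⊥
      (quantTopology (gc.monotone_l.comp gc.monotone_u) gc.l_u_le
        (fun v => congrArg φ (gc.u_l_u_eq_u v))) where
  cover_lift {c} S hS := by
    rw [GrothendieckTopology.bot_covering]
    ext c' f
    simp only [Sieve.top_apply, iff_true]
    exact S.downward_closed hS
      (homOfLE (gc.monotone_l ((leOfHom f).trans (gc.le_u_l c))))

theorem isContinuous_quantTopology :
    gc.monotone_u.functor.IsContinuous
      (quantTopology (gc.monotone_l.comp gc.monotone_u) gc.l_u_le
        (fun v => congrArg φ (gc.u_l_u_eq_u v))) ⊥ :=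
  have := gc.isCocontinuous_quantTopology
  gc.adjunction.isContinuous_of_isCocontinuous _ _

end GaloisConnection

theorem isSheaf_psiStar.{w, u, u'}
    {C : Type u} {V : Type u'} [PartialOrder C] [PartialOrder V]
    {φ : C → V} {ψ : V → C} (gc : GaloisConnection φ ψ)
    (P : Cᵒᵖ ⥤ Type w) :
    Presieve.IsSheaf
      (quantTopology (gc.monotone_l.comp gc.monotone_u) gc.l_u_le
        (fun v => congrArg φ (gc.u_l_u_eq_u v)))
      (gc.monotone_u.functor.op ⋙ P) := by
  have := gc.isContinuous_quantTopology
  exact gc.monotone_u.functor.op_comp_isSheaf_of_isSheaf_type _ Presieve.isSheaf_bot
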